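/- Let G be an X–Y normalized graph, and let S ⊆ N(X) be a set such that no vertex of S is adjacent to a vertex of Y. Then there is exactly one important witness of S. -/

import Mathlib

variable {V : Type*}

/-- `K` is an `X`–`Y` separator of `G`: `K` avoids `X ∪ Y` and every walk
from a vertex of `X` to a vertex of `Y` meets `K` (i.e. there is no
`X`–`Y` path in `G \ K`). -/
def IsSeparator (G : SimpleGraph V) (X Y K : Set V) : Prop :=
  K ⊆ (X ∪ Y)ᶜ ∧
  ∀ x ∈ X, ∀ y ∈ Y, ∀ w : G.Walk x y, ∃ v ∈ w.support, v ∈ K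

/-- `NR G A B`: the vertices of `G \ B` that are not reachable from `A` in `G \ B`. -/
def NR (G : SimpleGraph V) (A B : Set V) : Set V :=
  {v | v ∉ B ∧ ¬ ∃ a ∈ A, ∃ w : G.Walk a v, ∀ x ∈ w.support, x ∉ B}

/-- `Reach G A B`: the vertices reachable from `A` in `G \ B`. -/
def Reach (G : SimpleGraph V) (A B : Set V) : Set V :=
  {v | ∃ a ∈ A, ∃ w : G.Walk a v, ∀ x ∈ w.support, x ∉ B}

/-- The order on `X`–`Y` separators: `K1 ≤ K2` iff `NR(G,Y,K1) ⊆ NR(G,Y,K2)`. -/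
def SepLE (G : SimpleGraph V) (Y K1 K2 : Set V) : Prop :=
  NR G Y K1 ⊆ NR G Y K2

/-- The strict order on `X`–`Y` separators. -/
def SepLT (G : SimpleGraph V) (Y K1 K2 : Set V) : Prop :=
  NR G Y K1 ⊆ NR G Y K2 ∧ NR G Y K1 ≠ NR G Y K2

/-- A minimal `X`–`Y` separator: no proper subset is an `X`–`Y` separator. -/
def IsMinimalSeparator (G : SimpleGraph V) (X Y K : Set V) : Prop :=
  IsSeparator G X Y K ∧ ∀ K' ⊂ K, ¬ IsSeparator G X Y K'

/-- An important `X`–`Y` separator: a minimal separator `K` such that there is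
no separator `K'` with `K < K'` and `|K'| ≤ |K|`. -/
def IsImportantSeparator (G : SimpleGraph V) (X Y K : Set V) : Prop :=
  IsMinimalSeparator G X Y K ∧
  ¬ ∃ K', IsSeparator G X Y K' ∧ SepLT G Y K K' ∧ K'.ncard ≤ K.ncard

/-- The minimum size of an `X`–`Y` separator of `G`. -/
noncomputable def minSepSize (G : SimpleGraph V) (X Y : Set V) : ℕ :=
  sInf {n | ∃ K, IsSeparator G X Y K ∧ K.ncard = n}

/-- The excess of a separator: its size minus the minimum separator size. -/
noncomputable def excess (G : SimpleGraph V) (X Y K : Set V) : ℕ :=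
  K.ncard - minSepSize G X Y

/-- The graph `Pr(G,X,Y,K)`: the vertices `NR(G,Y,K) \ X` are deleted (here:
made isolated), and every vertex of `X` is made adjacent to every vertex of `K`. -/
def PrGraph (G : SimpleGraph V) (X Y K : Set V) : SimpleGraph V where
  Adj u v := u ≠ v ∧ u ∉ NR G Y K \ X ∧ v ∉ NR G Y K \ X ∧
    (G.Adj u v ∨ (u ∈ X ∧ v ∈ K) ∨ (u ∈ K ∧ v ∈ X))
  symm := by
    constructor
    rintro u v ⟨h1, h2, h3, h4⟩
    refine ⟨h1.symm, h3, h2, ?_⟩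
    rcases h4 with h | h | h
    · exact Or.inl h.symm
    · exact Or.inr (Or.inr ⟨h.2, h.1⟩)
    · exact Or.inr (Or.inl ⟨h.2, h.1⟩)
  loopless := by constructor; rintro v ⟨h1, -⟩; exact h1 rfl

/-- `NSet G X` is `N(X)`: the set of vertices outside `X` adjacent to a vertex of `X`. -/
def NSet (G : SimpleGraph V) (X : Set V) : Set V :=
  {v | v ∉ X ∧ ∃ x ∈ X, G.Adj x v}

/-- `G` is `X`–`Y` normalized: `N(X)` is an `X`–`Y` separator and is
the unique smallest `X`–`Y` separator. -/
def Normalized (G : SimpleGraph V) (X Y : Set V) : Prop :=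
  IsSeparator G X Y (NSet G X) ∧
  ∀ K, IsSeparator G X Y K → K ≠ NSet G X → (NSet G X).ncard < K.ncard

/-- The cover excess `CE(S)`: the minimum excess of an `X`–`Y` separator disjoint from `S`. -/
noncomputable def CE (G : SimpleGraph V) (X Y S : Set V) : ℕ :=
  sInf {n | ∃ K, IsSeparator G X Y K ∧ Disjoint K S ∧ excess G X Y K = n}

/-- A witness of `S`: an `X`–`Y` separator disjoint from `S` whose excess equals `CE(S)`. -/
noncomputable def IsWitness (G : SimpleGraph V) (X Y S K : Set V) : Prop :=
  IsSeparator G X Y K ∧ Disjoint K S ∧ excess G X Y K = CE G X Y S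

/-- An important witness of `S`: a witness of `S` that is an important `X`–`Y` separator. -/
noncomputable def IsImportantWitness (G : SimpleGraph V) (X Y S K : Set V) : Prop :=
  IsWitness G X Y S K ∧ IsImportantSeparator G X Y K

/-! A witness of `S` exists because `N(X ∪ S)` is a separator avoiding `S`, and every witness has
size `λ + CE(S)`, where `λ` is the minimum separator size. Among the witnesses, one whose
non-`Y`-side `NR(G, Y, K)` is largest is important: a separator `K'` beyond `K` with
`|K'| ≤ |K|` still avoids `S`, since `S` lies on the `X`-side of every separator avoiding it.

For uniqueness, let `A`, `B` be important witnesses with `Y`-sides `P`, `Q`. By submodularity of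
`T ↦ |N(T)|`, the separators `N(P ∪ Q)` and `N(P ∩ Q)`, both contained in `A ∪ B`, have total
size at most `|A| + |B|`. The first has size at least `λ + CE(S)`, so `|N(P ∩ Q)| ≤ |A| = |B|`;
as `N(P ∩ Q)` lies beyond both `A` and `B`, importance gives
`NR(G, Y, A) = NR(G, Y, N(P ∩ Q)) = NR(G, Y, B)`, and a minimal separator is determined by its
`NR`-set. -/

open SimpleGraph

variable {G : SimpleGraph V} {A B P Q X Y S K K' : Set V}

lemma notMem_of_mem_reach {v : V} (h : v ∈ Reach G A B) : v ∉ B := by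
  obtain ⟨_, _, w, hw⟩ := h
  exact hw v w.end_mem_support

lemma mem_reach_of_mem {v : V} (hv : v ∈ A) (hvB : v ∉ B) : v ∈ Reach G A B :=
  ⟨v, hv, .nil, by simpa using hvB⟩

lemma subset_reach (h : Disjoint A B) : A ⊆ Reach G A B :=
  fun _ hv => mem_reach_of_mem hv (Set.disjoint_left.mp h hv)

lemma mem_reach_of_adj {u v : V} (hu : u ∈ Reach G A B) (huv : G.Adj u v) (hv : v ∉ B) :
    v ∈ Reach G A B := by
  obtain ⟨a, ha, w, hw⟩ := hu
  refine ⟨a, ha, w.concat huv, fun x hx => ?_⟩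
  rw [Walk.support_concat, List.mem_append, List.mem_singleton] at hx
  rcases hx with hx | rfl
  exacts [hw x hx, hv]

lemma nset_reach_subset : NSet G (Reach G A B) ⊆ B := by
  rintro v ⟨hv, u, hu, huv⟩
  by_contra hvB
  exact hv (mem_reach_of_adj hu huv hvB)

lemma disjoint_nset_self : Disjoint (NSet G P) P :=
  Set.disjoint_left.mpr fun _ hv => hv.1

lemma SimpleGraph.Walk.exists_mem_support_nset :
    ∀ {a v : V} (w : G.Walk a v), a ∈ P → v ∉ P → ∃ b ∈ w.support, b ∈ NSet G P
  | _, _, .nil, ha, hv => absurd ha hv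
  | _, _, .cons (v := c) huc p, ha, hv => by
    by_cases hc : c ∈ P
    · obtain ⟨b, hb, hbP⟩ := p.exists_mem_support_nset hc hv
      exact ⟨b, by simp [hb], hbP⟩
    · exact ⟨c, by simp, hc, _, ha, huc⟩

namespace IsSeparator

lemma symm (h : IsSeparator G X Y K) : IsSeparator G Y X K :=
  ⟨fun _ hv hYX => h.1 hv hYX.symm, fun y hy x hx w => by
    simpa using h.2 x hx y hy w.reverse⟩

lemma disjoint (h : IsSeparator G X Y K) : Disjoint X Y :=
  Set.disjoint_left.mpr fun x hx hy => by
    obtain ⟨v, hv, hvK⟩ := h.2 x hx x hy .nil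
    rw [Walk.support_nil, List.mem_singleton] at hv
    exact h.1 (hv ▸ hvK) (Or.inl hx)

lemma disjoint_left (h : IsSeparator G X Y K) : Disjoint K X :=
  Set.disjoint_left.mpr fun _ hv hx => h.1 hv (Or.inl hx)

lemma disjoint_right (h : IsSeparator G X Y K) : Disjoint K Y :=
  Set.disjoint_left.mpr fun _ hv hy => h.1 hv (Or.inr hy)

lemma disjoint_reach (h : IsSeparator G X Y K) : Disjoint (Reach G X K) (Reach G Y K) := by
  refine Set.disjoint_left.mpr ?_
  rintro v ⟨x, hx, w₁, h₁⟩ ⟨y, hy, w₂, h₂⟩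
  obtain ⟨b, hb, hbK⟩ := h.2 x hx y hy (w₁.append w₂.reverse)
  rw [Walk.mem_support_append_iff, Walk.support_reverse, List.mem_reverse] at hb
  exact hb.elim (h₁ b · hbK) (h₂ b · hbK)

lemma reach_subset_NR (h : IsSeparator G X Y K) : Reach G X K ⊆ NR G Y K :=
  fun _ hv => ⟨notMem_of_mem_reach hv, Set.disjoint_left.mp h.disjoint_reach hv⟩

end IsSeparator

lemma isSeparator_nset (hXP : X ⊆ P) (hPY : Disjoint P Y) (hNY : Disjoint (NSet G P) Y) :
    IsSeparator G X Y (NSet G P) :=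
  ⟨fun _ hv hXY => hXY.elim (fun hx => hv.1 (hXP hx)) (Set.disjoint_left.mp hNY hv),
    fun _ hx _ hy w => w.exists_mem_support_nset (hXP hx) (Set.disjoint_right.mp hPY hy)⟩

lemma isSeparator_nset_union (hN : IsSeparator G X Y (NSet G X)) (hS : S ⊆ NSet G X)
    (hSY : ∀ s ∈ S, ∀ y ∈ Y, ¬ G.Adj s y) : IsSeparator G X Y (NSet G (X ∪ S)) := by
  refine isSeparator_nset Set.subset_union_left
    (Set.disjoint_union_left.mpr ⟨hN.disjoint, hN.disjoint_right.mono_left hS⟩)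
    (Set.disjoint_left.mpr ?_)
  rintro v ⟨hv, u, hu | hu, huv⟩ hvY
  · exact Set.disjoint_left.mp hN.disjoint_right ⟨fun hvX => hv (Or.inl hvX), u, hu, huv⟩ hvY
  · exact hSY u hu v hvY huv

lemma isSeparator_nset_of_subset_reach (hA : IsSeparator G X Y A) (hB : IsSeparator G X Y B)
    (hYP : Y ⊆ P) (hP : P ⊆ Reach G Y A ∪ Reach G Y B) (hN : NSet G P ⊆ A ∪ B) :
    IsSeparator G X Y (NSet G P) := by
  have hX (K : Set V) (hK : IsSeparator G X Y K) : Disjoint (Reach G Y K) X :=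
    (hK.disjoint_reach.mono_left (subset_reach hK.disjoint_left.symm)).symm
  refine (isSeparator_nset hYP ((Set.disjoint_union_left.mpr ⟨hX A hA, hX B hB⟩).mono_left hP)
    ?_).symm
  exact (Set.disjoint_union_left.mpr ⟨hA.disjoint_left, hB.disjoint_left⟩).mono_left hN

lemma NR_subset_NR_nset (hYP : Y ⊆ P) (hP : P ⊆ Reach G Y K) :
    NR G Y K ⊆ NR G Y (NSet G P) := by
  rintro v ⟨hvK, hvR⟩
  refine ⟨fun ⟨_, u, hu, huv⟩ => hvR (mem_reach_of_adj (hP hu) huv hvK), ?_⟩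
  rintro ⟨y, hy, w, hw⟩
  obtain ⟨b, hb, hbN⟩ := w.exists_mem_support_nset (hYP hy) fun hvP => hvR (hP hvP)
  exact hw b hb hbN

namespace IsMinimalSeparator

lemma nset_reach_eq (h : IsMinimalSeparator G X Y K) : NSet G (Reach G X K) = K := by
  by_contra hne
  refine h.2 _ (nset_reach_subset.ssubset_of_ne hne) (isSeparator_nset
    (subset_reach h.1.disjoint_left.symm)
    (h.1.disjoint_reach.mono_right (subset_reach h.1.disjoint_right.symm))
    (h.1.disjoint_right.mono_left nset_reach_subset))

/-- Each vertex of `K` has a neighbour in `NR(G, Y, K) = NR(G, Y, K')`, which it could not have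
if it were reachable from `Y` in `G \ K'`. -/
lemma subset_of_NR_eq (h : IsMinimalSeparator G X Y K) (hNR : NR G Y K' = NR G Y K) :
    K ⊆ K' := by
  intro k hk
  obtain ⟨-, d, hd, hdk⟩ : k ∈ NSet G (Reach G X K) := h.nset_reach_eq.symm ▸ hk
  have hdNR : d ∈ NR G Y K' := hNR ▸ h.1.reach_subset_NR hd
  by_contra hkK'
  have hkR : k ∈ Reach G Y K' := by
    by_contra hkR
    exact (hNR ▸ ⟨hkK', hkR⟩ : k ∈ NR G Y K).1 hk
  exact hdNR.2 (mem_reach_of_adj hkR hdk.symm hdNR.1)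

lemma eq_of_NR_eq (hK : IsMinimalSeparator G X Y K) (hK' : IsMinimalSeparator G X Y K')
    (hNR : NR G Y K = NR G Y K') : K = K' :=
  (hK.subset_of_NR_eq hNR.symm).antisymm (hK'.subset_of_NR_eq hNR)

end IsMinimalSeparator

lemma IsImportantSeparator.NR_eq_of_sepLE (h : IsImportantSeparator G X Y K)
    (hK' : IsSeparator G X Y K') (hle : SepLE G Y K K') (hcard : K'.ncard ≤ K.ncard) :
    NR G Y K = NR G Y K' := by
  by_contra hne
  exact h.2 ⟨K', hK', ⟨hle, hne⟩, hcard⟩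

lemma nset_union_subset : NSet G (P ∪ Q) ⊆ NSet G P ∪ NSet G Q := by
  rintro v ⟨hv, u, hu | hu, huv⟩
  · exact Or.inl ⟨fun h => hv (Or.inl h), u, hu, huv⟩
  · exact Or.inr ⟨fun h => hv (Or.inr h), u, hu, huv⟩

lemma nset_inter_subset : NSet G (P ∩ Q) ⊆ NSet G P ∪ NSet G Q := by
  rintro v ⟨hv, u, hu, huv⟩
  by_cases hvP : v ∈ P
  · exact Or.inr ⟨fun hvQ => hv ⟨hvP, hvQ⟩, u, hu.2, huv⟩
  · exact Or.inl ⟨hvP, u, hu.1, huv⟩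

lemma nset_union_inter_nset_inter_subset :
    NSet G (P ∪ Q) ∩ NSet G (P ∩ Q) ⊆ NSet G P ∩ NSet G Q := by
  rintro v ⟨⟨hv, -⟩, -, u, hu, huv⟩
  exact ⟨⟨fun h => hv (Or.inl h), u, hu.1, huv⟩, ⟨fun h => hv (Or.inr h), u, hu.2, huv⟩⟩

lemma ncard_nset_union_add_ncard_nset_inter_le [Finite V] :
    (NSet G (P ∪ Q)).ncard + (NSet G (P ∩ Q)).ncard ≤ (NSet G P).ncard + (NSet G Q).ncard := by
  rw [← Set.ncard_union_add_ncard_inter, ← Set.ncard_union_add_ncard_inter (NSet G P)]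
  exact add_le_add (Set.ncard_le_ncard (Set.union_subset nset_union_subset nset_inter_subset))
    (Set.ncard_le_ncard nset_union_inter_nset_inter_subset)

lemma minSepSize_le_ncard (h : IsSeparator G X Y K) : minSepSize G X Y ≤ K.ncard :=
  Nat.sInf_le ⟨K, h, rfl⟩

lemma CE_le_excess (h : IsSeparator G X Y K) (hS : Disjoint K S) :
    CE G X Y S ≤ excess G X Y K :=
  Nat.sInf_le ⟨K, h, hS, rfl⟩

lemma minSepSize_add_CE_le_ncard (h : IsSeparator G X Y K) (hS : Disjoint K S) :
    minSepSize G X Y + CE G X Y S ≤ K.ncard := by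
  have := minSepSize_le_ncard h
  have := CE_le_excess h hS
  unfold excess at *
  omega

lemma IsWitness.ncard_eq (h : IsWitness G X Y S K) :
    K.ncard = minSepSize G X Y + CE G X Y S := by
  have := minSepSize_le_ncard h.1
  have := h.2.2
  unfold excess at this
  omega

lemma isWitness_of_ncard_le (h : IsSeparator G X Y K) (hS : Disjoint K S)
    (hcard : K.ncard ≤ minSepSize G X Y + CE G X Y S) : IsWitness G X Y S K := by
  refine ⟨h, hS, ?_⟩
  have := minSepSize_add_CE_le_ncard h hS
  unfold excess
  omega

lemma exists_isWitness (h : IsSeparator G X Y K) (hS : Disjoint K S) :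
    ∃ K, IsWitness G X Y S K := by
  obtain ⟨K, hK, hKS, hex⟩ : CE G X Y S ∈ {n | ∃ K, IsSeparator G X Y K ∧ Disjoint K S ∧
      excess G X Y K = n} := Nat.sInf_mem ⟨_, K, h, hS, rfl⟩
  exact ⟨K, hK, hKS, hex⟩

lemma IsWitness.isMinimalSeparator [Finite V] (h : IsWitness G X Y S K) :
    IsMinimalSeparator G X Y K := by
  refine ⟨h.1, fun K' hK' hsep => ?_⟩
  have := Set.ncard_lt_ncard hK'
  have := minSepSize_add_CE_le_ncard hsep (h.2.1.mono_left hK'.subset)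
  have := h.ncard_eq
  omega

lemma IsWitness.of_sepLE (hS : S ⊆ NSet G X) (h : IsWitness G X Y S K)
    (hK' : IsSeparator G X Y K') (hle : SepLE G Y K K') (hcard : K'.ncard ≤ K.ncard) :
    IsWitness G X Y S K' := by
  refine isWitness_of_ncard_le hK' (Set.disjoint_right.mpr fun s hs => ?_) (h.ncard_eq ▸ hcard)
  obtain ⟨-, x, hx, hxs⟩ := hS hs
  have hsR : s ∈ Reach G X K := mem_reach_of_adj
    (mem_reach_of_mem hx (Set.disjoint_right.mp h.1.disjoint_left hx)) hxs
    (Set.disjoint_right.mp h.2.1 hs)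
  exact (hle (h.1.reach_subset_NR hsR)).1

lemma exists_isImportantWitness [Finite V] (hS : S ⊆ NSet G X) (h : ∃ K, IsWitness G X Y S K) :
    ∃ K, IsImportantWitness G X Y S K := by
  obtain ⟨K, hK, hmax⟩ := Set.Finite.exists_maximalFor (fun K => (NR G Y K).ncard)
    {K | IsWitness G X Y S K} (Set.toFinite _) h
  refine ⟨K, hK, hK.isMinimalSeparator, ?_⟩
  rintro ⟨K', hK', ⟨hle, hne⟩, hcard⟩
  have hlt : (NR G Y K).ncard < (NR G Y K').ncard := Set.ncard_lt_ncard (hle.ssubset_of_ne hne)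
  exact hlt.not_ge (hmax (hK.of_sepLE hS hK' hle hcard) hlt.le)

lemma IsImportantWitness.eq [Finite V] (hA : IsImportantWitness G X Y S A)
    (hB : IsImportantWitness G X Y S B) : A = B := by
  set P := Reach G Y A
  set Q := Reach G Y B
  have hYP : Y ⊆ P := subset_reach hA.1.1.disjoint_right.symm
  have hYQ : Y ⊆ Q := subset_reach hB.1.1.disjoint_right.symm
  have hN : NSet G (P ∪ Q) ∪ NSet G (P ∩ Q) ⊆ A ∪ B :=
    (Set.union_subset nset_union_subset nset_inter_subset).trans
      (Set.union_subset_union nset_reach_subset nset_reach_subset)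
  have hsepUnion : IsSeparator G X Y (NSet G (P ∪ Q)) :=
    isSeparator_nset_of_subset_reach hA.1.1 hB.1.1 (hYP.trans Set.subset_union_left) le_rfl
      (Set.subset_union_left.trans hN)
  have hsepInter : IsSeparator G X Y (NSet G (P ∩ Q)) :=
    isSeparator_nset_of_subset_reach hA.1.1 hB.1.1 (Set.subset_inter hYP hYQ)
      (Set.inter_subset_left.trans Set.subset_union_left) (Set.subset_union_right.trans hN)
  have hdisjUnion : Disjoint (NSet G (P ∪ Q)) S :=
    (Set.disjoint_union_left.mpr ⟨hA.1.2.1, hB.1.2.1⟩).mono_left (Set.subset_union_left.trans hN)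
  have hcard : (NSet G (P ∪ Q)).ncard + (NSet G (P ∩ Q)).ncard ≤ A.ncard + B.ncard :=
    ncard_nset_union_add_ncard_nset_inter_le.trans
      (add_le_add (Set.ncard_le_ncard nset_reach_subset) (Set.ncard_le_ncard nset_reach_subset))
  have := minSepSize_add_CE_le_ncard hsepUnion hdisjUnion
  have := hA.1.ncard_eq
  have := hB.1.ncard_eq
  have hNRA := hA.2.NR_eq_of_sepLE hsepInter
    (NR_subset_NR_nset (Set.subset_inter hYP hYQ) Set.inter_subset_left) (by omega)
  have hNRB := hB.2.NR_eq_of_sepLE hsepInter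
    (NR_subset_NR_nset (Set.subset_inter hYP hYQ) Set.inter_subset_right) (by omega)
  exact hA.2.1.eq_of_NR_eq hB.2.1 (hNRA.trans hNRB.symm)

theorem existsUnique_important_witness_general
    {V : Type*} [Fintype V] (G : SimpleGraph V) (X Y S : Set V)
    (hnorm : Normalized G X Y)
    (hS : S ⊆ NSet G X) (hSY : ∀ s ∈ S, ∀ y ∈ Y, ¬ G.Adj s y) :
    ∃! K : Set V, IsImportantWitness G X Y S K := by
  obtain ⟨K, hK⟩ := exists_isImportantWitness hS <| exists_isWitness
    (isSeparator_nset_union hnorm.1 hS hSY) (disjoint_nset_self.mono_right Set.subset_union_right)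
  exact ⟨K, hK, fun _ hK' => hK'.eq hK⟩

/-- Let `G` be an `X`–`Y` normalized graph and `S ⊆ N(X)` a
set no vertex of which is adjacent to a vertex of `Y`.  Then there is exactly
one important witness of `S`. -/
theorem existsUnique_important_witness
    {V : Type*} [Fintype V] (G : SimpleGraph V) (X Y S : Set V)
    (hXY : Disjoint X Y) (hnorm : Normalized G X Y)
    (hS : S ⊆ NSet G X) (hSY : ∀ s ∈ S, ∀ y ∈ Y, ¬ G.Adj s y) :
    ∃! K : Set V, IsImportantWitness G X Y S K :=
  existsUnique_important_witness_general G X Y S hnorm hS hSY
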